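/- The two complex 3-dimensional algebras A₂₇ (e₁e₁ = e₂, e₁e₃ = e₃, e₃e₁ = −e₃) and A₂₈ (e₁e₁ = e₂, e₁e₃ = e₂, e₃e₁ = −e₂) are not isomorphic as algebras. -/
import Mathlib


/-- The algebra A₂₇ : e₁e₁ = e₂, e₁e₃ = e₃, e₃e₁ = −e₃. -/
def mulA27 (x y : Fin 3 → ℂ) : Fin 3 → ℂ :=
  ![0, x 0 * y 0, x 0 * y 2 - x 2 * y 0]

/-- The algebra A₂₈ : e₁e₁ = e₂, e₁e₃ = e₂, e₃e₁ = −e₂. -/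
def mulA28 (x y : Fin 3 → ℂ) : Fin 3 → ℂ :=
  ![0, x 0 * y 0 + x 0 * y 2 - x 2 * y 0, 0]

theorem stmt_14 :
    ¬ ∃ φ : (Fin 3 → ℂ) ≃ₗ[ℂ] (Fin 3 → ℂ),
      ∀ x y : Fin 3 → ℂ, φ (mulA27 x y) = mulA28 (φ x) (φ y) := by
  rintro ⟨φ, h⟩
  set e1 : Fin 3 → ℂ := ![1, 0, 0] with he1
  set e3 : Fin 3 → ℂ := ![0, 0, 1] with he3
  have h13 : mulA27 e1 e3 = e3 := by
    funext i
    fin_cases i <;> simp [mulA27, he1, he3]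
  have key : φ e3 = mulA28 (φ e1) (φ e3) := by
    conv_lhs => rw [← h13]
    exact h e1 e3
  have h0 : φ e3 0 = 0 := by rw [key]; simp [mulA28]
  have h2 : φ e3 2 = 0 := by rw [key]; simp [mulA28]
  have h1 : φ e3 1 = 0 := by
    conv_lhs => rw [key]
    simp [mulA28, h0, h2]
  have hz : φ e3 = 0 := by
    funext i
    fin_cases i <;> simp [h0, h1, h2]
  have : e3 = 0 := by
    have := φ.injective (by rw [hz]; simp : φ e3 = φ 0)
    exact this
  have : (0 : ℂ) = 1 := by
    have h := congrFun this 2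
    simp [he3] at h
  simp at this
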